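/- Let B be a bivariant theory on V in which every fiber (Cartesian) square is independent, and assume in addition that pushforward along identity morphisms and pullback along identity fiber squares act as the identity homomorphism on the groups B(X → Y). Let S be a bivariant subset of B, and for each morphism h : X → Y let J(X →h Y) be the set of finite integral linear combinations of elements f_*(α • g^*(s) • β) as follows: s ∈ S(A → B); g : B' → B is any morphism of V, A' → B' is the fiber-product pullback of A → B along g (so that g^*(s) ∈ B(A' → B')); β ∈ B(B' → Y); α ∈ B(A'' → A'); and f : A'' → X is confined with h ∘ f equal to the composite A'' → A' → B' → Y. Then J contains S, J is contained in every bivariant ideal of B containing S, and hence J equals the bivariant ideal ⟨S⟩ generated by S (the smallest bivariant ideal of B containing S). -/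

import Mathlib

open CategoryTheory CategoryTheory.Limits

universe w v u

/-- Cast between elements of (propositionally) equal bundled abelian groups. -/
def gcast {G H : AddCommGrpCat.{w}} (e : G = H) (a : G) : H := by subst e; exact a

/-- A category `V` with a final object and fiber products, equipped with a class of
confined morphisms and a class of independent (commutative fiber) squares.
A square is recorded by its top, left, right and bottom sides. -/
structure BivariantSetup (V : Type u) [Category.{v} V] [HasTerminal V]
    [HasPullbacks V] where
  /-- The class of confined morphisms. -/
  Confined : ∀ {X Y : V}, (X ⟶ Y) → Prop
  /-- `Indep g' f' f g` : the square with top `g' : X' ⟶ X`, left `f' : X' ⟶ Y'`,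
  right `f : X ⟶ Y` and bottom `g : Y' ⟶ Y` is independent. -/
  Indep : ∀ {X' X Y' Y : V}, (X' ⟶ X) → (X' ⟶ Y') → (X ⟶ Y) → (Y' ⟶ Y) → Prop
  confined_id : ∀ X : V, Confined (𝟙 X)
  confined_comp : ∀ {X Y Z : V} {f : X ⟶ Y} {g : Y ⟶ Z},
    Confined f → Confined g → Confined (f ≫ g)
  confined_of_isPullback : ∀ {X' X Y' Y : V} {g' : X' ⟶ X} {f' : X' ⟶ Y'}
    {f : X ⟶ Y} {g : Y' ⟶ Y}, IsPullback g' f' f g → Confined f → Confined f'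
  indep_comm : ∀ {X' X Y' Y : V} {g' : X' ⟶ X} {f' : X' ⟶ Y'} {f : X ⟶ Y}
    {g : Y' ⟶ Y}, Indep g' f' f g → g' ≫ f = f' ≫ g
  indep_horiz : ∀ {X'' X' X Y'' Y' Y : V} {h' : X'' ⟶ X'} {g' : X' ⟶ X}
    {f'' : X'' ⟶ Y''} {f' : X' ⟶ Y'} {f : X ⟶ Y} {h : Y'' ⟶ Y'} {g : Y' ⟶ Y},
    Indep g' f' f g → Indep h' f'' f' h → Indep (h' ≫ g') f'' f (h ≫ g)
  indep_vert : ∀ {X' X Y' Y Z' Z : V} {h'' : X' ⟶ X} {h' : Y' ⟶ Y} {h : Z' ⟶ Z}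
    {f' : X' ⟶ Y'} {f : X ⟶ Y} {g' : Y' ⟶ Z'} {g : Y ⟶ Z},
    Indep h'' f' f h' → Indep h' g' g h → Indep h'' (f' ≫ g') (f ≫ g) h
  indep_id_top : ∀ {X Y : V} (f : X ⟶ Y), Indep (𝟙 X) f f (𝟙 Y)
  indep_id_sides : ∀ {X Y : V} (f : X ⟶ Y), Indep f (𝟙 X) (𝟙 Y) f

/-- A Fulton–MacPherson bivariant theory on `V`, taking values in graded abelian
groups, with product, pushforward along confined morphisms, pullback along
independent squares, units, and the seven axioms (A1)–(A123) together with (U). -/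
structure BivariantTheory (V : Type u) [Category.{v} V] [HasTerminal V]
    [HasPullbacks V] (S : BivariantSetup V) where
  /-- The degree `i` part of the graded abelian group assigned to `f : X ⟶ Y`. -/
  grp : ∀ (X Y : V), (X ⟶ Y) → ℤ → AddCommGrpCat.{w}
  /-- Bivariant product. -/
  prod : ∀ {X Y Z : V} {f : X ⟶ Y} {g : Y ⟶ Z} {i j : ℤ},
    grp X Y f i → grp Y Z g j → grp X Z (f ≫ g) (i + j)
  /-- Bivariant pushforward along a confined morphism. -/
  push : ∀ {X Y Z : V} {f : X ⟶ Y} {g : Y ⟶ Z} {i : ℤ},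
    S.Confined f → grp X Z (f ≫ g) i → grp Y Z g i
  /-- Bivariant pullback along an independent square. -/
  pull : ∀ {X' X Y' Y : V} {g' : X' ⟶ X} {f' : X' ⟶ Y'} {f : X ⟶ Y} {g : Y' ⟶ Y}
    {i : ℤ}, S.Indep g' f' f g → grp X Y f i → grp X' Y' f' i
  /-- The units `1_X`. -/
  one : ∀ X : V, grp X X (𝟙 X) 0
  prod_add_left : ∀ {X Y Z : V} {f : X ⟶ Y} {g : Y ⟶ Z} {i j : ℤ}
    (a a' : grp X Y f i) (b : grp Y Z g j),
    prod (a + a') b = prod a b + prod a' b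
  prod_add_right : ∀ {X Y Z : V} {f : X ⟶ Y} {g : Y ⟶ Z} {i j : ℤ}
    (a : grp X Y f i) (b b' : grp Y Z g j),
    prod a (b + b') = prod a b + prod a b'
  push_add : ∀ {X Y Z : V} {f : X ⟶ Y} {g : Y ⟶ Z} {i : ℤ} (hf : S.Confined f)
    (a a' : grp X Z (f ≫ g) i), push hf (a + a') = push hf a + push hf a'
  pull_add : ∀ {X' X Y' Y : V} {g' : X' ⟶ X} {f' : X' ⟶ Y'} {f : X ⟶ Y}
    {g : Y' ⟶ Y} {i : ℤ} (hsq : S.Indep g' f' f g) (a a' : grp X Y f i),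
    pull hsq (a + a') = pull hsq a + pull hsq a'
  /-- (A1) Associativity of the product. -/
  prod_assoc : ∀ {X Y Z W : V} {f : X ⟶ Y} {g : Y ⟶ Z} {h : Z ⟶ W} {i j k : ℤ}
    (α : grp X Y f i) (β : grp Y Z g j) (γ : grp Z W h k)
    (e : grp X W ((f ≫ g) ≫ h) (i + j + k) = grp X W (f ≫ g ≫ h) (i + (j + k))),
    gcast e (prod (prod α β) γ) = prod α (prod β γ)
  /-- (A2) Functoriality of pushforward. -/
  push_comp : ∀ {X Y Z W : V} {f : X ⟶ Y} {g : Y ⟶ Z} {h : Z ⟶ W} {i : ℤ}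
    (hf : S.Confined f) (hg : S.Confined g) (α : grp X W ((f ≫ g) ≫ h) i)
    (e : grp X W ((f ≫ g) ≫ h) i = grp X W (f ≫ g ≫ h) i),
    push (S.confined_comp hf hg) α = push hg (push hf (gcast e α))
  /-- (A3) Functoriality of pullback. -/
  pull_comp : ∀ {X'' X' X Y'' Y' Y : V} {h' : X'' ⟶ X'} {g' : X' ⟶ X}
    {f'' : X'' ⟶ Y''} {f' : X' ⟶ Y'} {f : X ⟶ Y} {h : Y'' ⟶ Y'} {g : Y' ⟶ Y}
    {i : ℤ} (h1 : S.Indep g' f' f g) (h2 : S.Indep h' f'' f' h)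
    (h12 : S.Indep (h' ≫ g') f'' f (h ≫ g)) (α : grp X Y f i),
    pull h12 α = pull h2 (pull h1 α)
  /-- (A12) Product and pushforward commute. -/
  push_prod : ∀ {X Y Z W : V} {f : X ⟶ Y} {g : Y ⟶ Z} {h : Z ⟶ W} {i j : ℤ}
    (hf : S.Confined f) (α : grp X Z (f ≫ g) i) (β : grp Z W h j)
    (e : grp X W ((f ≫ g) ≫ h) (i + j) = grp X W (f ≫ g ≫ h) (i + j)),
    push hf (gcast e (prod α β)) = prod (push hf α) β
  /-- (A13) Product and pullback commute. -/
  pull_prod : ∀ {X' X Y' Y Z' Z : V} {h'' : X' ⟶ X} {h' : Y' ⟶ Y} {h : Z' ⟶ Z}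
    {f' : X' ⟶ Y'} {f : X ⟶ Y} {g' : Y' ⟶ Z'} {g : Y ⟶ Z} {i j : ℤ}
    (hu : S.Indep h'' f' f h') (hl : S.Indep h' g' g h)
    (hb : S.Indep h'' (f' ≫ g') (f ≫ g) h)
    (α : grp X Y f i) (β : grp Y Z g j),
    pull hb (prod α β) = prod (pull hu α) (pull hl β)
  /-- (A23) Pushforward and pullback commute. -/
  push_pull : ∀ {X' X Y' Y Z' Z : V} {h'' : X' ⟶ X} {h' : Y' ⟶ Y} {h : Z' ⟶ Z}
    {f' : X' ⟶ Y'} {f : X ⟶ Y} {g' : Y' ⟶ Z'} {g : Y ⟶ Z} {i : ℤ}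
    (hu : S.Indep h'' f' f h') (hl : S.Indep h' g' g h)
    (hb : S.Indep h'' (f' ≫ g') (f ≫ g) h)
    (hf : S.Confined f) (hf' : S.Confined f') (α : grp X Z (f ≫ g) i),
    push hf' (pull hb α) = pull hl (push hf α)
  /-- (A123) Projection formula. -/
  projection : ∀ {X' X Y' Y Z : V} {g' : X' ⟶ X} {f' : X' ⟶ Y'} {f : X ⟶ Y}
    {g : Y' ⟶ Y} {h : Y ⟶ Z} {i j : ℤ}
    (hsq : S.Indep g' f' f g) (hg : S.Confined g) (hg' : S.Confined g')
    (α : grp X Y f i) (β : grp Y' Z (g ≫ h) j)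
    (e : grp X' Z (f' ≫ g ≫ h) (i + j) = grp X' Z (g' ≫ f ≫ h) (i + j)),
    push hg' (gcast e (prod (pull hsq α) β)) = prod α (push hg β)
  /-- (U) Right unit law. -/
  prod_one : ∀ {W X : V} {f : W ⟶ X} {i : ℤ} (α : grp W X f i)
    (e : grp W X (f ≫ 𝟙 X) (i + 0) = grp W X f i),
    gcast e (prod α (one X)) = α
  /-- (U) Left unit law. -/
  one_prod : ∀ {X Y : V} {f : X ⟶ Y} {i : ℤ} (β : grp X Y f i)
    (e : grp X Y (𝟙 X ≫ f) (0 + i) = grp X Y f i),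
    gcast e (prod (one X) β) = β
  /-- (U) Units are stable under pullback. -/
  pull_one : ∀ {X' X : V} (g : X' ⟶ X) (hsq : S.Indep g (𝟙 X') (𝟙 X) g),
    pull hsq (one X) = one X'

/-- A bivariant ideal of a bivariant theory: a collection of (graded) subgroups
closed under pushforward along confined morphisms, pullback along independent
squares, and left and right bivariant product by arbitrary elements. -/
structure BivariantIdeal {V : Type u} [Category.{v} V] [HasTerminal V]
    [HasPullbacks V] {S : BivariantSetup V} (B : BivariantTheory V S) where
  carrier : ∀ {X Y : V} (f : X ⟶ Y) (i : ℤ), AddSubgroup ↥(B.grp X Y f i)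
  push_mem : ∀ {X Y Z : V} {f : X ⟶ Y} {g : Y ⟶ Z} {i : ℤ} (hf : S.Confined f)
    {α : B.grp X Z (f ≫ g) i}, α ∈ carrier (f ≫ g) i → B.push hf α ∈ carrier g i
  pull_mem : ∀ {X' X Y' Y : V} {g' : X' ⟶ X} {f' : X' ⟶ Y'} {f : X ⟶ Y}
    {g : Y' ⟶ Y} {i : ℤ} (hsq : S.Indep g' f' f g) {α : B.grp X Y f i},
    α ∈ carrier f i → B.pull hsq α ∈ carrier f' i
  prod_mem_left : ∀ {X' X Y : V} {h : X' ⟶ X} {f : X ⟶ Y} {i j : ℤ}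
    (β : B.grp X' X h i) {α : B.grp X Y f j},
    α ∈ carrier f j → B.prod β α ∈ carrier (h ≫ f) (i + j)
  prod_mem_right : ∀ {X Y Y' : V} {f : X ⟶ Y} {g : Y ⟶ Y'} {i j : ℤ}
    {α : B.grp X Y f i} (γ : B.grp Y Y' g j),
    α ∈ carrier f i → B.prod α γ ∈ carrier (f ≫ g) (i + j)

/-- Given a bivariant subset `T` of `B`, the set of elements of
`B(X →h Y)` of the form `f_*(α • g^*(s) • β)`, where `s ∈ T(A → B₀)`,
`g : B' → B₀` is any morphism, `A' → B'` is the fiber-product pullback of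
`A → B₀` along `g` (an independent square), `α ∈ B(A'' → A')`, `β ∈ B(B' → Y)`,
and `f : A'' → X` is confined with `h ∘ f` equal to the composite
`A'' → A' → B' → Y`. -/
def genSet {V : Type u} [Category.{v} V] [HasTerminal V] [HasPullbacks V]
    {S : BivariantSetup V} (B : BivariantTheory V S)
    (T : ∀ (X Y : V) (f : X ⟶ Y) (i : ℤ), Set ↥(B.grp X Y f i))
    {X Y : V} (h : X ⟶ Y) (n : ℤ) : Set ↥(B.grp X Y h n) :=
  { x | ∃ (A B₀ A' B' A'' : V) (q : A ⟶ B₀) (gtop : A' ⟶ A) (p : A' ⟶ B')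
      (g : B' ⟶ B₀) (a : A'' ⟶ A') (b : B' ⟶ Y) (f : A'' ⟶ X)
      (i j k : ℤ) (s : ↥(B.grp A B₀ q j)), s ∈ T A B₀ q j ∧
      ∃ (_ : IsPullback gtop p q g) (hsq : S.Indep gtop p q g)
        (hf : S.Confined f) (α : ↥(B.grp A'' A' a i)) (β : ↥(B.grp B' Y b k))
        (_ : (a ≫ p) ≫ b = f ≫ h) (_ : i + j + k = n)
        (e : B.grp A'' Y ((a ≫ p) ≫ b) (i + j + k) = B.grp A'' Y (f ≫ h) n),
        x = B.push hf (gcast e (B.prod (B.prod α (B.pull hsq s)) β)) }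

/-- The subgroup of `B(X →h Y)` of finite integral linear combinations of the
elements `f_*(α • g^*(s) • β)` described in `genSet`. -/
def generatedCarrier {V : Type u} [Category.{v} V] [HasTerminal V] [HasPullbacks V]
    {S : BivariantSetup V} (B : BivariantTheory V S)
    (T : ∀ (X Y : V) (f : X ⟶ Y) (i : ℤ), Set ↥(B.grp X Y f i))
    {X Y : V} (h : X ⟶ Y) (n : ℤ) : AddSubgroup ↥(B.grp X Y h n) :=
  AddSubgroup.closure (genSet B T h n)

/-!
Choosing every auxiliary morphism to be an identity and `α`, `β` to be units writes `s ∈ T` as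
`𝟙_*(1 • 𝟙^*(s) • 1)`, which is `s` by the unit laws once pushforward and pullback along identities
are trivial. Conversely each generator `f_*(α • g^*(s) • β)` is obtained from `s` by a pullback,
two products and a pushforward, all of which preserve a bivariant ideal.
-/

section

variable {V : Type u} [Category.{v} V] [HasTerminal V] [HasPullbacks V]
  {S : BivariantSetup V} {B : BivariantTheory V S}

lemma gcast_gcast {G H K : AddCommGrpCat.{w}} (e₁ : G = H) (e₂ : H = K) (a : G) :
    gcast e₂ (gcast e₁ a) = gcast (e₁.trans e₂) a := by
  subst e₁ e₂; rfl

lemma BivariantTheory.one_prod_prod_one (B : BivariantTheory V S) {X Y : V} {h : X ⟶ Y}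
    {n : ℤ} (s : B.grp X Y h n)
    (e : B.grp X Y ((𝟙 X ≫ h) ≫ 𝟙 Y) (0 + n + 0) = B.grp X Y h n) :
    gcast e (B.prod (B.prod (B.one X) s) (B.one Y)) = s := by
  have e₁ : B.grp X Y ((𝟙 X ≫ h) ≫ 𝟙 Y) (0 + n + 0) = B.grp X Y (𝟙 X ≫ h) (0 + n) := by
    simp
  have e₂ : B.grp X Y (𝟙 X ≫ h) (0 + n) = B.grp X Y h n := by simp
  calc gcast e (B.prod (B.prod (B.one X) s) (B.one Y))
      = gcast e₂ (gcast e₁ (B.prod (B.prod (B.one X) s) (B.one Y))) :=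
        (gcast_gcast e₁ e₂ _).symm
    _ = gcast e₂ (B.prod (B.one X) s) := by rw [B.prod_one]
    _ = s := B.one_prod s e₂

lemma mem_genSet_of_mem {T : ∀ (X Y : V) (f : X ⟶ Y) (i : ℤ), Set ↥(B.grp X Y f i)}
    {X Y : V} {h : X ⟶ Y} {n : ℤ} {s : B.grp X Y h n}
    (hpush : ∀ (α : ↥(B.grp X Y (𝟙 X ≫ h) n)) (e : B.grp X Y (𝟙 X ≫ h) n = B.grp X Y h n),
      B.push (S.confined_id X) α = gcast e α)
    (hpull : B.pull (S.indep_id_top h) s = s) (hs : s ∈ T X Y h n) :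
    s ∈ genSet B T h n := by
  refine ⟨X, Y, X, Y, X, h, 𝟙 X, h, 𝟙 Y, 𝟙 X, 𝟙 Y, 𝟙 X, 0, n, 0, s, hs, IsPullback.of_id_fst,
    S.indep_id_top h, S.confined_id X, B.one X, B.one Y, by simp, by ring, by simp, ?_⟩
  rw [hpush _ (by simp), gcast_gcast, hpull, B.one_prod_prod_one]

namespace BivariantIdeal

lemma gcast_mem (I : BivariantIdeal B) {X Y : V} {f g : X ⟶ Y} {i n : ℤ} (hfg : f = g)
    (hin : i = n) (e : B.grp X Y f i = B.grp X Y g n) {y : ↥(B.grp X Y f i)}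
    (hy : y ∈ I.carrier f i) : gcast e y ∈ I.carrier g n := by
  subst hfg hin; exact hy

variable (I : BivariantIdeal B) {T : ∀ (X Y : V) (f : X ⟶ Y) (i : ℤ), Set ↥(B.grp X Y f i)}

lemma genSet_subset (hT : ∀ (X Y : V) (h : X ⟶ Y) (n : ℤ), T X Y h n ⊆ ↑(I.carrier h n))
    {X Y : V} (h : X ⟶ Y) (n : ℤ) : genSet B T h n ⊆ I.carrier h n := by
  rintro _ ⟨A, B₀, A', B', A'', q, gtop, p, g, a, b, f, i, j, k, s, hs,
    -, hsq, hf, α, β, hcomm, hdeg, e, rfl⟩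
  exact I.push_mem hf <| I.gcast_mem hcomm hdeg e <| I.prod_mem_right β <|
    I.prod_mem_left α <| I.pull_mem hsq (hT _ _ _ _ hs)

lemma generatedCarrier_le (hT : ∀ (X Y : V) (h : X ⟶ Y) (n : ℤ), T X Y h n ⊆ ↑(I.carrier h n))
    {X Y : V} (h : X ⟶ Y) (n : ℤ) :
    generatedCarrier B T h n ≤ I.carrier h n :=
  (AddSubgroup.closure_le _).2 (I.genSet_subset hT h n)

end BivariantIdeal

end

theorem generatedCarrier_eq_span_general
    {V : Type u} [Category.{v} V] [HasTerminal V] [HasPullbacks V]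
    {S : BivariantSetup V} (B : BivariantTheory V S)
    (hpushid : ∀ {X Y : V} (g : X ⟶ Y) {i : ℤ} (h1 : S.Confined (𝟙 X))
      (α : ↥(B.grp X Y (𝟙 X ≫ g) i))
      (e : B.grp X Y (𝟙 X ≫ g) i = B.grp X Y g i),
      B.push h1 α = gcast e α)
    (hpullid : ∀ {X Y : V} (f : X ⟶ Y) {i : ℤ} (hsq : S.Indep (𝟙 X) f f (𝟙 Y))
      (α : ↥(B.grp X Y f i)), B.pull hsq α = α)
    (T : ∀ (X Y : V) (f : X ⟶ Y) (i : ℤ), Set ↥(B.grp X Y f i)) :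
    (∀ (X Y : V) (h : X ⟶ Y) (n : ℤ),
      T X Y h n ⊆ ↑(generatedCarrier B T h n)) ∧
    (∀ I : BivariantIdeal B,
      (∀ (X Y : V) (h : X ⟶ Y) (n : ℤ), T X Y h n ⊆ ↑(I.carrier h n)) →
      ∀ (X Y : V) (h : X ⟶ Y) (n : ℤ),
        generatedCarrier B T h n ≤ I.carrier h n) :=
  ⟨fun _ _ h _ s hs =>
      AddSubgroup.subset_closure (mem_genSet_of_mem (hpushid h _) (hpullid h _ s) hs),
    fun I hT _ _ h n => I.generatedCarrier_le hT h n⟩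

/-- Suppose every fiber (Cartesian) square in `V` is independent, and pushforward
along identity morphisms as well as pullback along identity fiber squares act as
the identity on `B`.  Then, for a bivariant subset `T` of `B`, the collection `J`
of subgroups of finite integral linear combinations of elements
`f_*(α • g^*(s) • β)` (with `s ∈ T`) contains `T`, and is contained in every
bivariant ideal of `B` containing `T`; hence `J` is the bivariant ideal `⟨T⟩`
generated by `T` (the smallest bivariant ideal of `B` containing `T`). -/
theorem generatedCarrier_eq_span
    {V : Type u} [Category.{v} V] [HasTerminal V] [HasPullbacks V]
    {S : BivariantSetup V} (B : BivariantTheory V S)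
    (hind : ∀ {X' X Y' Y : V} {g' : X' ⟶ X} {f' : X' ⟶ Y'} {f : X ⟶ Y}
      {g : Y' ⟶ Y}, IsPullback g' f' f g → S.Indep g' f' f g)
    (hpushid : ∀ {X Y : V} (g : X ⟶ Y) {i : ℤ} (h1 : S.Confined (𝟙 X))
      (α : ↥(B.grp X Y (𝟙 X ≫ g) i))
      (e : B.grp X Y (𝟙 X ≫ g) i = B.grp X Y g i),
      B.push h1 α = gcast e α)
    (hpullid : ∀ {X Y : V} (f : X ⟶ Y) {i : ℤ} (hsq : S.Indep (𝟙 X) f f (𝟙 Y))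
      (α : ↥(B.grp X Y f i)), B.pull hsq α = α)
    (T : ∀ (X Y : V) (f : X ⟶ Y) (i : ℤ), Set ↥(B.grp X Y f i)) :
    (∀ (X Y : V) (h : X ⟶ Y) (n : ℤ),
      T X Y h n ⊆ ↑(generatedCarrier B T h n)) ∧
    (∀ I : BivariantIdeal B,
      (∀ (X Y : V) (h : X ⟶ Y) (n : ℤ), T X Y h n ⊆ ↑(I.carrier h n)) →
      ∀ (X Y : V) (h : X ⟶ Y) (n : ℤ),
        generatedCarrier B T h n ≤ I.carrier h n) :=
  generatedCarrier_eq_span_general B hpushid hpullid T
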